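/- arXiv:1802.07837 — 5 statements merged into one kernel-verified Lean document; each statement's English description precedes it below -/
import Mathlib

section
/- Let n ≥ 3 and let H be a subgroup of the group C₂ⁿ (sign vectors in {±1}ⁿ under coordinatewise multiplication). If H is invariant under the action of the alternating group Aₙ permuting coordinates, then H is one of: the trivial group, the group generated by the all-(-1) vector, the subgroup of vectors with an even number of -1 entries, or all of C₂ⁿ. -/
open Equiv

/-- The action of permutations on sign vectors by permuting coordinates. -/
def permAction (n : ℕ) : Perm (Fin n) →* MulAut (Fin n → ℤˣ) where
  toFun σ := MulEquiv.arrowCongr σ (MulEquiv.refl ℤˣ)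
  map_one' := by ext v i; rfl
  map_mul' σ τ := by ext v i; rfl

/-- The product-of-signs homomorphism `C₂ⁿ → {±1}`. -/
def prodHom (n : ℕ) : (Fin n → ℤˣ) →* ℤˣ := ∏ i : Fin n, Pi.evalMonoidHom (fun _ => ℤˣ) i

namespace SignsAux

variable {n : ℕ}

lemma units_mul_eq_neg_one : ∀ a b : ℤˣ, a ≠ b → a * b = -1 := by decide

lemma units_eq_of_ne_of_ne : ∀ a b c : ℤˣ, a ≠ b → c ≠ b → a = c := by decide

def e (p : Fin n) : Fin n → ℤˣ := fun l => if l = p then -1 else 1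

def d (p q : Fin n) : Fin n → ℤˣ := e p * e q

lemma permAction_apply (σ : Perm (Fin n)) (v : Fin n → ℤˣ) (l : Fin n) :
    permAction n σ v l = v (σ.symm l) := rfl

lemma permAction_e (σ : Perm (Fin n)) (p : Fin n) :
    permAction n σ (e p) = e (σ p) := by
  funext l
  simp only [permAction_apply, e]
  by_cases h : l = σ p
  · simp [h]
  · rw [if_neg, if_neg h]
    rw [Equiv.symm_apply_eq]
    exact h

lemma permAction_d (σ : Perm (Fin n)) (p q : Fin n) :
    permAction n σ (d p q) = d (σ p) (σ q) := by
  simp only [d, map_mul, permAction_e]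

lemma prodHom_apply (v : Fin n → ℤˣ) : prodHom n v = ∏ i, v i := by
  simp [prodHom]

lemma d_apply (p q l : Fin n) :
    d p q l = (if l = p then -1 else 1) * (if l = q then -1 else 1) := rfl

lemma d_comm (p q : Fin n) : d p q = d q p := mul_comm _ _

lemma d_mul_d (p q : Fin n) : d p q * d p q = 1 := by
  funext l
  show d p q l * d p q l = 1
  exact Int.units_mul_self _

lemma card_filter_even {v : Fin n → ℤˣ} (hv : prodHom n v = 1) :
    Even (Finset.filter (fun l => v l = -1) Finset.univ).card := by
  have h1 : prodHom n v = (-1 : ℤˣ) ^ (Finset.filter (fun l => v l = -1) Finset.univ).card := by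
    rw [prodHom_apply]
    rw [← Finset.prod_const, Finset.prod_filter]
    refine Finset.prod_congr rfl fun i _ => ?_
    rcases Int.units_eq_one_or (v i) with h | h <;> simp [h]
  rw [hv] at h1
  by_contra hodd
  rw [Nat.not_even_iff_odd] at hodd
  rw [hodd.neg_one_pow] at h1
  exact absurd h1.symm (by decide)

lemma mem_of_card (H : Subgroup (Fin n → ℤˣ)) (hd : ∀ p q : Fin n, p ≠ q → d p q ∈ H) :
    ∀ k : ℕ, ∀ v : Fin n → ℤˣ, Even k →
      (Finset.filter (fun l => v l = -1) Finset.univ).card = k → v ∈ H := by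
  intro k
  induction k using Nat.strong_induction_on with
  | _ k ih =>
    intro v hk hcard
    rcases Nat.eq_zero_or_pos k with h0 | hpos
    · have hv1 : v = 1 := by
        funext l
        rcases Int.units_eq_one_or (v l) with h | h
        · exact h
        · exfalso
          have hl : l ∈ Finset.filter (fun l => v l = -1) Finset.univ := by
            simp [h]
          rw [Finset.card_eq_zero.mp (hcard.trans h0)] at hl
          exact absurd hl (Finset.notMem_empty l)
      rw [hv1]; exact one_mem H
    · have h2 : 2 ≤ k := by
        rcases hk with ⟨m, rfl⟩; omega
      have hne : (Finset.filter (fun l => v l = -1) Finset.univ).Nonempty := by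
        rw [← Finset.card_pos, hcard]; omega
      obtain ⟨p, hp⟩ := hne
      obtain ⟨q, hq, hqp⟩ := Finset.exists_mem_ne (by rw [hcard]; omega) p
      have hvp : v p = -1 := (Finset.mem_filter.mp hp).2
      have hvq : v q = -1 := (Finset.mem_filter.mp hq).2
      have hpq : p ≠ q := fun h => hqp (h.symm)
      set v' := v * d p q with hv'
      have hfilter : Finset.filter (fun l => v' l = -1) Finset.univ
          = (Finset.filter (fun l => v l = -1) Finset.univ) \ {p, q} := by
        ext l
        simp only [Finset.mem_filter, Finset.mem_univ, true_and, Finset.mem_sdiff,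
          Finset.mem_insert, Finset.mem_singleton]
        have hv'l : v' l = v l * d p q l := rfl
        by_cases hlp : l = p
        · subst hlp
          rw [hv'l, d_apply, if_pos rfl, if_neg hpq, hvp]
          simp
        · by_cases hlq : l = q
          · subst hlq
            rw [hv'l, d_apply, if_neg (by exact fun h => hpq h.symm), if_pos rfl, hvq]
            simp [hlp]
          · rw [hv'l, d_apply, if_neg hlp, if_neg hlq]
            simp [hlp, hlq]
      have hsub : ({p, q} : Finset (Fin n)) ⊆ Finset.filter (fun l => v l = -1) Finset.univ := by
        intro x hx
        rcases Finset.mem_insert.mp hx with h | h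
        · subst h; exact hp
        · rw [Finset.mem_singleton.mp h]; exact hq
      have hcard' : (Finset.filter (fun l => v' l = -1) Finset.univ).card = k - 2 := by
        rw [hfilter, Finset.card_sdiff_of_subset hsub, hcard, Finset.card_insert_of_notMem (by simp [hpq]),
          Finset.card_singleton]
      have hev : Even (k - 2) := by rcases hk with ⟨m, rfl⟩; exact ⟨m - 1, by omega⟩
      have hv'H : v' ∈ H := ih (k - 2) (by omega) v' hev hcard'
      have : v' * d p q ∈ H := H.mul_mem hv'H (hd p q hpq)
      rwa [hv', mul_assoc, d_mul_d, mul_one] at this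

end SignsAux

namespace SignsAux

lemma exists_double (H : Subgroup (Fin n → ℤˣ)) (hn : 3 ≤ n)
    (hinv : ∀ σ ∈ alternatingGroup (Fin n), ∀ v ∈ H, permAction n σ v ∈ H)
    (v : Fin n → ℤˣ) (hv : v ∈ H) (i j : Fin n) (hij : v i ≠ v j) :
    ∃ a b : Fin n, a ≠ b ∧ d a b ∈ H := by
  have hij' : i ≠ j := fun h => hij (by rw [h])
  obtain ⟨k, hki, hkj⟩ : ∃ k : Fin n, k ≠ i ∧ k ≠ j := by
    by_contra hc
    push_neg at hc
    have hsub : (Finset.univ : Finset (Fin n)) ⊆ {i, j} := by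
      intro x _
      by_cases hx : x = i
      · simp [hx]
      · simp [hc x hx]
    have := Finset.card_le_card hsub
    simp only [Finset.card_univ, Fintype.card_fin] at this
    have h2 : ({i, j} : Finset (Fin n)).card ≤ 2 :=
      (Finset.card_insert_le _ _).trans (by simp)
    omega
  set σ : Perm (Fin n) := swap i k * swap j k with hσdef
  have hσmem : σ ∈ alternatingGroup (Fin n) := by
    rw [Equiv.Perm.mem_alternatingGroup]
    rw [hσdef, map_mul, Equiv.Perm.sign_swap (Ne.symm hki), Equiv.Perm.sign_swap (Ne.symm hkj)]
    decide
  have hσj : σ j = i := by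
    show (swap i k) ((swap j k) j) = i
    rw [swap_apply_left, swap_apply_right]
  have hσk : σ k = j := by
    show (swap i k) ((swap j k) k) = j
    rw [swap_apply_right, swap_apply_of_ne_of_ne (Ne.symm hij') (Ne.symm hkj)]
  have hσi : σ i = k := by
    show (swap i k) ((swap j k) i) = k
    rw [swap_apply_of_ne_of_ne hij' (Ne.symm hki), swap_apply_left]
  have hsj : σ.symm i = j := by rw [Equiv.symm_apply_eq, hσj]
  have hsk : σ.symm j = k := by rw [Equiv.symm_apply_eq, hσk]
  have hsi : σ.symm k = i := by rw [Equiv.symm_apply_eq, hσi]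
  set w := v * permAction n σ v with hwdef
  have hwH : w ∈ H := H.mul_mem hv (hinv σ hσmem v hv)
  have hw : ∀ l, w l = v l * v (σ.symm l) := fun l => rfl
  have hwi : w i = -1 := by rw [hw, hsj]; exact units_mul_eq_neg_one _ _ hij
  have hwfix : ∀ l, l ≠ i → l ≠ j → l ≠ k → w l = 1 := by
    intro l hli hlj hlk
    have hσl : σ l = l := by
      show (swap i k) ((swap j k) l) = l
      rw [swap_apply_of_ne_of_ne hlj hlk, swap_apply_of_ne_of_ne hli hlk]
    have : σ.symm l = l := by rw [Equiv.symm_apply_eq, hσl]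
    rw [hw, this]
    exact Int.units_mul_self _
  by_cases hvk : v k = v i
  · refine ⟨i, j, hij', ?_⟩
    have : w = d i j := by
      funext l
      by_cases hli : l = i
      · subst hli; rw [hwi, d_apply, if_pos rfl, if_neg hij']; simp
      · by_cases hlj : l = j
        · subst hlj
          rw [hw, hsk, hvk, d_apply, if_neg (Ne.symm hij'), if_pos rfl]
          simp [units_mul_eq_neg_one _ _ (Ne.symm hij)]
        · by_cases hlk : l = k
          · subst hlk
            rw [hw, hsi, hvk, Int.units_mul_self, d_apply, if_neg hki, if_neg hkj]; simp
          · rw [hwfix l hli hlj hlk, d_apply, if_neg hli, if_neg hlj]; simp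
    rw [← this]; exact hwH
  · refine ⟨i, k, Ne.symm hki, ?_⟩
    have hvkj : v k = v j := units_eq_of_ne_of_ne _ _ _ hvk (Ne.symm hij)
    have : w = d i k := by
      funext l
      by_cases hli : l = i
      · subst hli; rw [hwi, d_apply, if_pos rfl, if_neg (Ne.symm hki)]; simp
      · by_cases hlj : l = j
        · subst hlj
          rw [hw, hsk, hvkj, Int.units_mul_self, d_apply, if_neg (Ne.symm hij'),
            if_neg (Ne.symm hkj)]; simp
        · by_cases hlk : l = k
          · subst hlk
            rw [hw, hsi, d_apply, if_neg hki, if_pos rfl]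
            simp [units_mul_eq_neg_one _ _ hvk]
          · rw [hwfix l hli hlj hlk, d_apply, if_neg hli, if_neg hlk]; simp
    rw [← this]; exact hwH

lemma double_mem (H : Subgroup (Fin n → ℤˣ))
    (hinv : ∀ σ ∈ alternatingGroup (Fin n), ∀ v ∈ H, permAction n σ v ∈ H)
    (a b : Fin n) (hab : a ≠ b) (hH : d a b ∈ H)
    (p q : Fin n) (hpq : p ≠ q) : d p q ∈ H := by
  set τ₁ : Perm (Fin n) := swap a p with hτ₁
  set b' := τ₁ b with hb'
  have hb'p : b' ≠ p := by
    rw [hb']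
    intro h
    have hba : b = a := τ₁.injective (h.trans (swap_apply_left a p).symm)
    exact hab hba.symm
  set τ : Perm (Fin n) := swap b' q * τ₁ with hτdef
  have hτa : τ a = p := by
    show (swap b' q) (τ₁ a) = p
    rw [swap_apply_left, swap_apply_of_ne_of_ne (Ne.symm hb'p) hpq]
  have hτb : τ b = q := by
    show (swap b' q) (τ₁ b) = q
    rw [← hb', swap_apply_left]
  by_cases hτs : Equiv.Perm.sign τ = 1
  · have := hinv τ (Equiv.Perm.mem_alternatingGroup.mpr hτs) _ hH
    rwa [permAction_d, hτa, hτb] at this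
  · set σ : Perm (Fin n) := swap p q * τ with hσdef
    have hσs : Equiv.Perm.sign σ = 1 := by
      have hτs' : Equiv.Perm.sign τ = -1 := (Int.units_eq_one_or _).resolve_left hτs
      rw [hσdef, map_mul, Equiv.Perm.sign_swap hpq, hτs']
      decide
    have := hinv σ (Equiv.Perm.mem_alternatingGroup.mpr hσs) _ hH
    rw [permAction_d] at this
    have hσa : σ a = q := by show (swap p q) (τ a) = q; rw [hτa, swap_apply_left]
    have hσb : σ b = p := by show (swap p q) (τ b) = p; rw [hτb, swap_apply_right]
    rwa [hσa, hσb, d_comm] at this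

end SignsAux

/-- If `H ≤ C₂ⁿ` (sign vectors under coordinatewise multiplication) is invariant under the
alternating group permuting coordinates, then `H` is trivial, generated by the all-`(-1)`
vector, the even-sign subgroup, or everything. -/
theorem subgroup_of_signs_invariant_under_alternating (n : ℕ) (hn : 3 ≤ n)
    (H : Subgroup (Fin n → ℤˣ))
    (hinv : ∀ σ ∈ alternatingGroup (Fin n), ∀ v ∈ H, permAction n σ v ∈ H) :
    H = ⊥ ∨ H = Subgroup.closure {fun _ => (-1 : ℤˣ)} ∨ H = (prodHom n).ker ∨ H = ⊤ := by
  classical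
  by_cases hconst : ∀ v ∈ H, ∀ i j : Fin n, v i = v j
  · have hchar : ∀ v ∈ H, v = 1 ∨ v = (fun _ => (-1 : ℤˣ)) := by
      intro v hv
      have i0 : Fin n := ⟨0, by omega⟩
      rcases Int.units_eq_one_or (v i0) with h | h
      · left; funext l; rw [hconst v hv l i0, h]; rfl
      · right; funext l; rw [hconst v hv l i0, h]
    by_cases hneg : (fun _ => (-1 : ℤˣ)) ∈ H
    · right; left
      apply le_antisymm
      · intro v hv
        rcases hchar v hv with h | h
        · rw [h]; exact one_mem _
        · rw [h]; exact Subgroup.subset_closure rfl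
      · rw [Subgroup.closure_le]
        intro x hx
        rw [Set.mem_singleton_iff.mp hx]
        exact hneg
    · left
      rw [Subgroup.eq_bot_iff_forall]
      intro v hv
      rcases hchar v hv with h | h
      · exact h
      · exact absurd (h ▸ hv) hneg
  · push_neg at hconst
    obtain ⟨v, hv, i, j, hij⟩ := hconst
    obtain ⟨a, b, hab, hdab⟩ := SignsAux.exists_double H hn hinv v hv i j hij
    have hdall : ∀ p q : Fin n, p ≠ q → SignsAux.d p q ∈ H :=
      fun p q hpq => SignsAux.double_mem H hinv a b hab hdab p q hpq
    have hker : (prodHom n).ker ≤ H := fun u hu =>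
      SignsAux.mem_of_card H hdall _ u
        (SignsAux.card_filter_even (MonoidHom.mem_ker.mp hu)) rfl
    by_cases hle : H ≤ (prodHom n).ker
    · right; right; left; exact le_antisymm hle hker
    · right; right; right
      rw [eq_top_iff]
      intro u _
      obtain ⟨w, hwH, hwk⟩ := SetLike.not_le_iff_exists.mp hle
      have hw : prodHom n w = -1 :=
        (Int.units_eq_one_or _).resolve_left (fun h => hwk (MonoidHom.mem_ker.mpr h))
      rcases Int.units_eq_one_or (prodHom n u) with h | h
      · exact hker (MonoidHom.mem_ker.mpr h)
      · have huw : u * w⁻¹ ∈ (prodHom n).ker := by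
          rw [MonoidHom.mem_ker, map_mul, map_inv, h, hw]
          decide
        have : (u * w⁻¹) * w ∈ H := H.mul_mem (hker huw) hwH
        rwa [inv_mul_cancel_right] at this
end

section
/- Let n ≥ 5. If K is a subgroup of the hyperoctahedral group Bₙ = C₂ⁿ ⋊ Sₙ of index k with 2 < k < n, then K = C₂ⁿ⁺ ⋊ Aₙ. -/
open Equiv SemidirectProduct

/-- The hyperoctahedral group `Bₙ = C₂ⁿ ⋊ Sₙ` as a semidirect product. -/
abbrev HyperOct (n : ℕ) := (Fin n → ℤˣ) ⋊[permAction n] Perm (Fin n)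

/-- The subgroup `C₂ⁿ⁺` of even sign vectors (an even number of `-1` entries). -/
def evenSign (n : ℕ) : Subgroup (Fin n → ℤˣ) := (prodHom n).ker

/-- The subgroup `V ⋊ P` of `Bₙ` determined by a subgroup `V` of sign vectors and a
subgroup `P` of permutations. -/
def mix {n : ℕ} (V : Subgroup (Fin n → ℤˣ)) (P : Subgroup (Perm (Fin n))) :
    Subgroup (HyperOct n) :=
  V.map (inl : _ →* HyperOct n) ⊔ P.map (inr : _ →* HyperOct n)

/-
The core of `K` is the kernel of the action of `Bₙ` on the `k < n` cosets of `K`. Restricted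
to `Sₙ` this action cannot be faithful, since `k! < n!`, so its kernel is a nontrivial normal
subgroup of `Sₙ` and therefore contains `Aₙ` (as `n ≥ 5`). Commutators `[εᵢ, σ]` of the sign
change `εᵢ` at `i` with an even permutation moving `i` to `j` are the vectors `εᵢ εⱼ`, which
generate `C₂ⁿ⁺`; so the core contains `C₂ⁿ⁺ ⋊ Aₙ`, the kernel of `(v, σ) ↦ (∏ v, sgn σ)` onto
`{±1}²`, which has index `4`. Hence `k ∣ 4` and `2 < k` force `k = 4` and `K = C₂ⁿ⁺ ⋊ Aₙ`.
-/

namespace Equiv.Perm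

theorem alternatingGroup_le_ker_of_card_lt {α β : Type*} [Fintype α] [DecidableEq α] [Finite β]
    (hα : 5 ≤ Nat.card α) (hβ : Nat.card β < Nat.card α) (f : Perm α →* Perm β) :
    alternatingGroup α ≤ f.ker := by
  have : Nontrivial f.ker := by
    rw [Subgroup.nontrivial_iff_ne_bot]
    intro hbot
    have hcard := Nat.card_le_card_of_injective f ((MonoidHom.ker_eq_bot_iff f).1 hbot)
    rw [Nat.card_perm, Nat.card_perm] at hcard
    rcases (Nat.card β).eq_zero_or_pos with h0 | hpos
    · rw [h0, Nat.factorial_zero] at hcard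
      exact (Nat.one_lt_factorial.2 (by omega)).not_ge hcard
    · exact (Nat.factorial_lt_of_lt hpos hβ).not_ge hcard
  exact alternatingGroup_le_of_normal hα this

end Equiv.Perm

theorem Subgroup.map_alternatingGroup_le_normalCore {G α : Type*} [Group G] [Fintype α]
    [DecidableEq α] {K : Subgroup G} [K.FiniteIndex] (f : Perm α →* G) (hα : 5 ≤ Nat.card α)
    (hK : K.index < Nat.card α) : (alternatingGroup α).map f ≤ K.normalCore := by
  rw [Subgroup.map_le_iff_le_comap, K.normalCore_eq_ker, MonoidHom.comap_ker]
  exact Perm.alternatingGroup_le_ker_of_card_lt hα (K.index_eq_card ▸ hK) _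

namespace HyperOct

variable {n : ℕ}

theorem prodHom_apply (v : Fin n → ℤˣ) : prodHom n v = ∏ i, v i := by
  simp [prodHom]

theorem mem_evenSign {v : Fin n → ℤˣ} : v ∈ evenSign n ↔ prodHom n v = 1 := Iff.rfl

theorem permAction_apply (σ : Perm (Fin n)) (v : Fin n → ℤˣ) (x : Fin n) :
    permAction n σ v x = v (σ⁻¹ x) := rfl

theorem prodHom_permAction (σ : Perm (Fin n)) (v : Fin n → ℤˣ) :
    prodHom n (permAction n σ v) = prodHom n v := by
  simpa [prodHom_apply, permAction_apply] using Equiv.prod_comp σ⁻¹ v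

theorem permAction_mulSingle (σ : Perm (Fin n)) (i : Fin n) (u : ℤˣ) :
    permAction n σ (Pi.mulSingle i u) = Pi.mulSingle (σ i) u := by
  funext x
  simp [permAction_apply, Pi.mulSingle_apply, Equiv.symm_apply_eq]

def signChar (n : ℕ) : HyperOct n →* ℤˣ × ℤˣ where
  toFun g := (prodHom n g.left, Perm.sign g.right)
  map_one' := by simp
  map_mul' g h := by simp [prodHom_permAction]

theorem signChar_apply (g : HyperOct n) : signChar n g = (prodHom n g.left, Perm.sign g.right) :=
  rfl

theorem signChar_surjective (hn : 2 ≤ n) : Function.Surjective (signChar n) := by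
  rintro ⟨u, s⟩
  have : Nontrivial (Fin n) := Fin.nontrivial_iff_two_le.2 hn
  obtain ⟨σ, rfl⟩ := Perm.sign_surjective (Fin n) s
  refine ⟨⟨Pi.mulSingle ⟨0, by omega⟩ u, σ⟩, ?_⟩
  simp [signChar_apply, prodHom_apply]

theorem mix_evenSign_alternatingGroup_eq_ker :
    mix (evenSign n) (alternatingGroup (Fin n)) = (signChar n).ker := by
  apply le_antisymm
  · apply sup_le
    · rintro _ ⟨v, hv, rfl⟩
      simpa [signChar_apply] using mem_evenSign.1 hv
    · rintro _ ⟨σ, hσ, rfl⟩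
      simpa [signChar_apply] using hσ
  · intro g hg
    rw [MonoidHom.mem_ker, signChar_apply, Prod.ext_iff] at hg
    rw [← inl_left_mul_inr_right g]
    exact mul_mem (Subgroup.mem_sup_left ⟨g.left, hg.1, rfl⟩)
      (Subgroup.mem_sup_right ⟨g.right, hg.2, rfl⟩)

theorem index_mix_evenSign_alternatingGroup (hn : 2 ≤ n) :
    (mix (evenSign n) (alternatingGroup (Fin n))).index = 4 := by
  rw [mix_evenSign_alternatingGroup_eq_ker, Subgroup.index_ker,
    MonoidHom.range_eq_top.2 (signChar_surjective hn), Subgroup.card_top, Nat.card_prod,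
    Nat.card_eq_fintype_card, Fintype.card_units_int]

theorem evenSign_le_of_mulSingle_mul_mem {W : Subgroup (Fin n → ℤˣ)}
    (hW : ∀ i j, Pi.mulSingle i (-1) * Pi.mulSingle j (-1) ∈ W) : evenSign n ≤ W := by
  intro v hv
  rcases isEmpty_or_nonempty (Fin n) with hempty | ⟨⟨i₀⟩⟩
  · rw [Subsingleton.elim v 1]
    exact W.one_mem
  have hdecomp : v = ∏ i, Pi.mulSingle i (v i) * Pi.mulSingle i₀ (v i) := by
    have hprod : ∏ i, v i = 1 := by rw [← prodHom_apply, ← mem_evenSign]; exact hv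
    have h := map_prod (MonoidHom.mulSingle (fun _ : Fin n => ℤˣ) i₀) v Finset.univ
    simp only [MonoidHom.mulSingle_apply, hprod, Pi.mulSingle_one] at h
    rw [Finset.prod_mul_distrib, Finset.univ_prod_mulSingle, ← h, mul_one]
  rw [hdecomp]
  refine Subgroup.prod_mem _ fun i _ => ?_
  rcases Int.units_eq_one_or (v i) with h | h <;> simp [h, hW]

theorem inl_mul_inv_permAction_mem {N : Subgroup (HyperOct n)} (hN : N.Normal)
    {σ : Perm (Fin n)} (hσ : inr σ ∈ N) (v : Fin n → ℤˣ) :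
    inl (v * (permAction n σ v)⁻¹) ∈ N := by
  have hcomm : (inl (v * (permAction n σ v)⁻¹) : HyperOct n) =
      inl v * inr σ * (inl v)⁻¹ * (inr σ)⁻¹ := by
    rw [map_mul, ← map_inv, inl_aut, ← map_inv, ← map_inv]
    group
  rw [hcomm]
  exact mul_mem (hN.conj_mem _ hσ _) (inv_mem hσ)

theorem mix_le_of_normal (hn : 3 ≤ n) {N : Subgroup (HyperOct n)} (hN : N.Normal)
    (hA : (alternatingGroup (Fin n)).map inr ≤ N) :
    mix (evenSign n) (alternatingGroup (Fin n)) ≤ N := by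
  refine sup_le ?_ hA
  rw [Subgroup.map_le_iff_le_comap]
  refine evenSign_le_of_mulSingle_mul_mem fun i j => ?_
  have := alternatingGroup.isPretransitive_of_three_le_card (α := Fin n) (by simpa)
  obtain ⟨⟨σ, hσA⟩, hσ⟩ := MulAction.exists_smul_eq (alternatingGroup (Fin n)) i j
  have := inl_mul_inv_permAction_mem hN (hA ⟨σ, hσA, rfl⟩) (Pi.mulSingle i (-1))
  rwa [permAction_mulSingle, show σ i = j from hσ, ← Pi.mulSingle_inv, Int.units_inv_eq_self]
    at this

end HyperOct

open HyperOct

/-- For `n ≥ 5`, a subgroup of the hyperoctahedral group `Bₙ` of index `k` with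
`2 < k < n` must be `C₂ⁿ⁺ ⋊ Aₙ`. -/
theorem subgroup_of_index_k_eq (n k : ℕ) (hn : 5 ≤ n) (K : Subgroup (HyperOct n))
    (hK : K.index = k) (hk2 : 2 < k) (hkn : k < n) :
    K = mix (evenSign n) (alternatingGroup (Fin n)) := by
  have : K.FiniteIndex := ⟨by omega⟩
  have hle : mix (evenSign n) (alternatingGroup (Fin n)) ≤ K :=
    (mix_le_of_normal (by omega) K.normalCore_normal
      (K.map_alternatingGroup_le_normalCore inr (by simpa) (by simpa [hK]))).trans
      K.normalCore_le
  have hdvd : k ∣ 4 := by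
    simpa [hK, index_mix_evenSign_alternatingGroup (n := n) (by omega)] using
      Subgroup.index_dvd_of_le hle
  have hk : k = 4 := by
    have := Nat.le_of_dvd (by norm_num) hdvd
    interval_cases k <;> omega
  have hrel := Subgroup.relIndex_mul_index hle
  rw [hK, hk, index_mix_evenSign_alternatingGroup (by omega)] at hrel
  exact le_antisymm (Subgroup.relIndex_eq_one.1 (by omega)) hle
end

section
/- Let Λ be a rank-n lattice in ℝⁿ, Π a hyperplane through the origin, and R the orthogonal reflection in Π. If ΛR = Λ, then Λ₀ = Λ ∩ Π is a lattice of rank n−1, and Λ is the union over k ∈ ℤ of the translates Λ₀ + kw, for any w ∈ Λ \ Π at minimum positive distance from Π. -/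
/-!
For `x ∈ Λ` the vector `x + R x = 2 • proj_Π x` lies in `Λ ∩ Π`, so the projection of `Λ` to `Π`,
which spans `Π`, lies in the real span of `Λ ∩ Π`. Being discrete and spanning `Π`, `Λ ∩ Π` is a
lattice of rank `dim Π = n - 1`.

Since `Π` has codimension one, the normal component of any `x ∈ Λ` is `s` times that of `w`. Then
`x - ⌊s⌋ • w ∈ Λ` is at distance `fract s • dist(w, Π) < dist(w, Π)` from `Π`, so by minimality
of `w` it lies in `Π`.
-/

open Metric Module Submodule

variable {E : Type*} [NormedAddCommGroup E] [InnerProductSpace ℝ E]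

theorem Submodule.add_reflection_eq_two_smul_starProjection (K : Submodule ℝ E)
    [K.HasOrthogonalProjection] (x : E) : x + K.reflection x = (2 : ℝ) • K.starProjection x := by
  rw [reflection_apply, two_smul, two_smul]
  abel

theorem Submodule.infDist_eq_norm_starProjection_orthogonal (K : Submodule ℝ E)
    [K.HasOrthogonalProjection] (x : E) : infDist x K = ‖Kᗮ.starProjection x‖ := by
  rw [starProjection_orthogonal_val, starProjection_minimal, infDist_eq_iInf]
  simp only [dist_eq_norm]
  rfl

theorem IsZLattice.exists_linearIndependent_span_eq {F : Type*} [NormedAddCommGroup F]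
    [NormedSpace ℝ F] [FiniteDimensional ℝ F] (M : Submodule ℤ F) [DiscreteTopology M]
    [IsZLattice ℝ M] :
    ∃ c : Fin (finrank ℝ F) → F, LinearIndependent ℝ c ∧ span ℤ (Set.range c) = M := by
  let b := finBasisOfFinrankEq ℤ M (ZLattice.rank ℝ M)
  exact ⟨b.ofZLatticeBasis ℝ M, (b.ofZLatticeBasis ℝ M).linearIndependent,
    b.ofZLatticeBasis_span ℝ⟩

instance (L : Submodule ℤ E) [DiscreteTopology L] (K : Submodule ℝ E) :
    DiscreteTopology (ZLattice.comap ℝ L K.subtype) :=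
  ZLattice.comap_discreteTopology ℝ L continuous_subtype_val K.injective_subtype

variable [FiniteDimensional ℝ E]

theorem orthogonalProjectionOnto_mem_span_comap_of_reflection_mem {L : Submodule ℤ E}
    {K : Submodule ℝ E} (hL : ∀ x ∈ L, K.reflection x ∈ L) {x : E} (hx : x ∈ L) :
    K.orthogonalProjectionOnto x ∈ span ℝ (ZLattice.comap ℝ L K.subtype : Set K) := by
  have hK : x + K.reflection x ∈ K := by
    rw [K.add_reflection_eq_two_smul_starProjection]
    exact K.smul_mem _ (K.starProjection_apply_mem x)
  have hmem : (⟨x + K.reflection x, hK⟩ : K) ∈ ZLattice.comap ℝ L K.subtype :=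
    L.add_mem hx (hL x hx)
  have heq : K.orthogonalProjectionOnto x = (2 : ℝ)⁻¹ • (⟨x + K.reflection x, hK⟩ : K) := by
    apply Subtype.ext
    change _ = (2 : ℝ)⁻¹ • (x + K.reflection x)
    rw [K.add_reflection_eq_two_smul_starProjection, smul_smul,
      inv_mul_cancel₀ two_ne_zero, one_smul, starProjection_apply]
  rw [heq]
  exact smul_mem _ _ (subset_span hmem)

theorem isZLattice_comap_subtype_of_reflection_mem (L : Submodule ℤ E) [DiscreteTopology L]
    [IsZLattice ℝ L] (K : Submodule ℝ E) (hL : ∀ x ∈ L, K.reflection x ∈ L) :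
    IsZLattice ℝ (ZLattice.comap ℝ L K.subtype) where
  span_top := by
    refine eq_top_iff.mpr fun z _ => ?_
    have hspan : span ℝ ((K.orthogonalProjectionOnto : E →ₗ[ℝ] K) '' L) ≤
        span ℝ (ZLattice.comap ℝ L K.subtype : Set K) := by
      refine span_le.mpr ?_
      rintro _ ⟨x, hx, rfl⟩
      exact orthogonalProjectionOnto_mem_span_comap_of_reflection_mem hL hx
    apply hspan
    rw [← map_span, IsZLattice.span_top, Submodule.map_top]
    exact ⟨z, orthogonalProjectionOnto_mem_subspace_eq_self z⟩

theorem exists_linearIndependent_span_eq_inf_of_reflection_mem (L : Submodule ℤ E)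
    [DiscreteTopology L] [IsZLattice ℝ L] (K : Submodule ℝ E)
    (hL : ∀ x ∈ L, K.reflection x ∈ L) :
    ∃ c : Fin (finrank ℝ K) → E, LinearIndependent ℝ c ∧
      span ℤ (Set.range c) = L ⊓ K.restrictScalars ℤ := by
  have := isZLattice_comap_subtype_of_reflection_mem L K hL
  obtain ⟨c, hc, hspan⟩ :=
    IsZLattice.exists_linearIndependent_span_eq (ZLattice.comap ℝ L K.subtype)
  refine ⟨K.subtype ∘ c, hc.map' _ K.ker_subtype, ?_⟩
  rw [Set.range_comp, ← LinearMap.coe_restrictScalars ℤ, ← map_span, hspan, ZLattice.comap,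
    map_comap_eq, LinearMap.range_restrictScalars, range_subtype, inf_comm]

theorem AddSubgroup.mem_iff_exists_sub_zsmul_mem_inf_of_infDist_le (L : AddSubgroup E)
    (K : Submodule ℝ E) (hK : finrank ℝ Kᗮ ≤ 1) {w : E} (hwL : w ∈ L) (hwK : w ∉ K)
    (hmin : ∀ y ∈ L, y ∉ K → infDist w K ≤ infDist y K) (x : E) :
    x ∈ L ↔ ∃ k : ℤ, x - k • w ∈ L ⊓ K.toAddSubgroup := by
  set p := Kᗮ.starProjection
  have hp : ∀ y, p y = 0 ↔ y ∈ K := fun y => by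
    rw [starProjection_apply, ZeroMemClass.coe_eq_zero, orthogonalProjectionOnto_eq_zero_iff,
      orthogonal_orthogonal]
  have hpw : (⟨p w, Kᗮ.starProjection_apply_mem w⟩ : Kᗮ) ≠ 0 :=
    fun h => hwK <| (hp w).mp (congrArg Subtype.val h)
  have hKperp : finrank ℝ Kᗮ = 1 :=
    le_antisymm hK (finrank_pos_iff_exists_ne_zero.mpr ⟨_, hpw⟩)
  obtain ⟨s, hs⟩ := (finrank_eq_one_iff_of_nonzero' _ hpw).mp hKperp
    ⟨p x, Kᗮ.starProjection_apply_mem x⟩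
  replace hs : p x = s • p w := (congrArg Subtype.val hs).symm
  refine ⟨fun hx => ⟨⌊s⌋, L.sub_mem hx (L.zsmul_mem hwL _), ?_⟩,
    fun ⟨k, hk⟩ => by simpa using L.add_mem hk.1 (L.zsmul_mem hwL k)⟩
  by_contra hxk
  have hpx : p (x - ⌊s⌋ • w) = Int.fract s • p w := by
    rw [map_sub, map_zsmul, hs, Int.fract, sub_smul, Int.cast_smul_eq_zsmul]
  have hle := hmin _ (L.sub_mem hx (L.zsmul_mem hwL _)) hxk
  rw [K.infDist_eq_norm_starProjection_orthogonal, K.infDist_eq_norm_starProjection_orthogonal,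
    hpx, norm_smul, Real.norm_of_nonneg (Int.fract_nonneg s)] at hle
  have hpw_pos : 0 < ‖p w‖ := norm_pos_iff.mpr fun h => hwK ((hp w).mp h)
  nlinarith [Int.fract_lt_one s]

/-- If a full-rank lattice `Λ` in `ℝⁿ` is preserved by the reflection `R` in a hyperplane
`Pl` through the origin, then `Λ₀ = Λ ∩ Pl` is a rank-`(n-1)` lattice and
`Λ = ⋃_{k ∈ ℤ} (Λ₀ + k w)` for any `w ∈ Λ \ Pl` at minimum (positive) distance from `Pl`. -/
theorem lattice_reflection_layers (n : ℕ)
    (L : AddSubgroup (EuclideanSpace ℝ (Fin n)))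
    (hL : ∃ b : Fin n → EuclideanSpace ℝ (Fin n),
      LinearIndependent ℝ b ∧ L = AddSubgroup.closure (Set.range b))
    (Pl : Submodule ℝ (EuclideanSpace ℝ (Fin n)))
    (hPl : Module.finrank ℝ Pl = n - 1)
    (hinv : ∀ x, x ∈ L ↔ Pl.reflection x ∈ L) :
    (∃ c : Fin (n - 1) → EuclideanSpace ℝ (Fin n), LinearIndependent ℝ c ∧
        L ⊓ Pl.toAddSubgroup = AddSubgroup.closure (Set.range c)) ∧
    ∀ w, w ∈ L → w ∉ Pl →
      (∀ y ∈ L, y ∉ Pl → infDist w (Pl : Set (EuclideanSpace ℝ (Fin n))) ≤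
        infDist y (Pl : Set (EuclideanSpace ℝ (Fin n)))) →
      ∀ x, x ∈ L ↔ ∃ k : ℤ, x - k • w ∈ L ⊓ Pl.toAddSubgroup := by
  have hcodim : finrank ℝ Plᗮ ≤ 1 := by
    have := Pl.finrank_add_finrank_orthogonal
    rw [finrank_euclideanSpace_fin] at this
    omega
  refine ⟨?_, fun w hwL hwPl hmin =>
    L.mem_iff_exists_sub_zsmul_mem_inf_of_infDist_le Pl hcodim hwL hwPl hmin⟩
  obtain ⟨b, hb, rfl⟩ := hL
  let B := basisOfLinearIndependentOfCardEqFinrank' b hb (by simp)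
  have hLB : AddSubgroup.closure (Set.range b) = (span ℤ (Set.range B)).toAddSubgroup := by
    rw [coe_basisOfLinearIndependentOfCardEqFinrank', span_int_eq_addSubgroupClosure]
  rw [hLB] at hinv ⊢
  rw [← hPl]
  obtain ⟨c, hc, hspan⟩ := exists_linearIndependent_span_eq_inf_of_reflection_mem
    (span ℤ (Set.range B)) Pl fun x hx => (hinv x).mp hx
  refine ⟨c, hc, ?_⟩
  rw [← span_int_eq_addSubgroupClosure, hspan]
  rfl
end

section
/- Let Λ be a rank-n lattice in ℝⁿ invariant under the orthogonal reflection R in a hyperplane Π through the origin, with Λ₀ = Λ ∩ Π and w a point of Λ \ Π at minimal positive distance d from Π. Then w can be chosen in Π^⊥ if and only if Λ is the union over k ∈ ℤ of Λ₀ + k u for some u ∈ Π^⊥ (i.e. Λ is a vertical translation lattice with respect to Π). -/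
/-!
With `P` the orthogonal projection onto `Π`, the distance of `x` to `Π` is `‖x - P x‖`, and
`x - P x` lies in the line `Π^⊥`.
If `w ∈ Λ ∩ Π^⊥` is a closest point, write `x - P x = c • w`; then `x - ⌊c⌋ • w ∈ Λ` lies at
distance `fract c * ‖w‖ < ‖w‖` from `Π`, so by minimality it lies in `Π`.  Conversely, if
`Λ = ⋃ₖ (Λ₀ + k u)` with `u ∈ Π^⊥`, every point of `Λ \ Π` lies at distance `|k| ‖u‖ ≥ ‖u‖`
from `Π`, so `u` itself is a closest point.
-/

open Metric Module

namespace Submodule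

section InnerProductSpace

variable {𝕜 E : Type*} [RCLike 𝕜] [NormedAddCommGroup E] [InnerProductSpace 𝕜 E]

theorem infDist_eq_norm_sub_starProjection (K : Submodule 𝕜 E) [K.HasOrthogonalProjection]
    (x : E) : infDist x K = ‖x - K.starProjection x‖ := by
  rw [starProjection_minimal, infDist_eq_iInf]
  simp only [dist_eq_norm]
  rfl

theorem infDist_add_of_mem_of_mem_orthogonal (K : Submodule 𝕜 E) [K.HasOrthogonalProjection]
    {y v : E} (hy : y ∈ K) (hv : v ∈ Kᗮ) : infDist (y + v) K = ‖v‖ := by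
  have hproj : K.starProjection (y + v) = y := by
    rw [map_add, starProjection_eq_self_iff.2 hy, (starProjection_apply_eq_zero_iff K).2 hv,
      add_zero]
  rw [infDist_eq_norm_sub_starProjection, hproj, add_sub_cancel_left]

theorem infDist_of_mem_orthogonal (K : Submodule 𝕜 E) [K.HasOrthogonalProjection]
    {v : E} (hv : v ∈ Kᗮ) : infDist v K = ‖v‖ := by
  simpa using K.infDist_add_of_mem_of_mem_orthogonal K.zero_mem hv

theorem orthogonal_eq_span_singleton [FiniteDimensional 𝕜 E] {K : Submodule 𝕜 E}
    (hK : finrank 𝕜 K = finrank 𝕜 E - 1) {w : E} (hw : w ∈ Kᗮ) (hw0 : w ≠ 0) :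
    Kᗮ = span 𝕜 {w} := by
  have hsum := K.finrank_add_finrank_orthogonal
  refine (eq_of_le_of_finrank_le ((span_singleton_le_iff_mem w _).2 hw) ?_).symm
  rw [finrank_span_singleton hw0]
  omega

end InnerProductSpace

variable {F : Type*} [NormedAddCommGroup F] [InnerProductSpace ℝ F]
  {K : Submodule ℝ F} [K.HasOrthogonalProjection] {L : AddSubgroup F}

theorem mem_iff_exists_sub_zsmul_mem_of_orthogonal_eq_span {w : F} (hK : Kᗮ = span ℝ {w})
    (hwL : w ∈ L) (hw0 : w ≠ 0) (hmin : ∀ y ∈ L, y ∉ K → ‖w‖ ≤ infDist y K) (x : F) :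
    x ∈ L ↔ ∃ k : ℤ, x - k • w ∈ L ⊓ K.toAddSubgroup := by
  refine ⟨fun hx => ?_, fun ⟨k, hk, _⟩ => by simpa using L.add_mem hk (L.zsmul_mem hwL k)⟩
  have hw : w ∈ Kᗮ := hK ▸ mem_span_singleton_self w
  obtain ⟨c, hc⟩ : ∃ c : ℝ, c • w = x - K.starProjection x :=
    mem_span_singleton.1 (hK ▸ sub_starProjection_mem_orthogonal x)
  have hyL : x - ⌊c⌋ • w ∈ L := L.sub_mem hx (L.zsmul_mem hwL _)
  refine ⟨⌊c⌋, hyL, by_contra fun hyK => ?_⟩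
  have hy : x - ⌊c⌋ • w = K.starProjection x + Int.fract c • w := by
    rw [Int.fract, sub_smul, hc, Int.cast_smul_eq_zsmul]
    abel
  have hle := hmin _ hyL hyK
  rw [hy, K.infDist_add_of_mem_of_mem_orthogonal (K.starProjection_apply_mem x)
    (Kᗮ.smul_mem _ hw), norm_smul, Real.norm_of_nonneg (Int.fract_nonneg c)] at hle
  exact (hle.trans_lt (mul_lt_of_lt_one_left (norm_pos_iff.2 hw0) (Int.fract_lt_one c))).false

theorem mem_and_infDist_le_of_forall_mem_iff {u : F} (hu : u ∈ Kᗮ)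
    (hL : ∀ x, x ∈ L ↔ ∃ k : ℤ, x - k • u ∈ L ⊓ K.toAddSubgroup) {y : F} (hy : y ∈ L)
    (hyK : y ∉ K) : u ∈ L ∧ u ∉ K ∧ infDist u K ≤ infDist y K := by
  obtain ⟨k, -, hk⟩ := (hL y).1 hy
  have hk0 : k ≠ 0 := by
    rintro rfl
    exact hyK (by simpa using hk)
  have hy_eq : y = (y - k • u) + k • u := (sub_add_cancel y _).symm
  refine ⟨(hL u).2 ⟨1, by simp [zero_mem]⟩, fun huK => hyK ?_, ?_⟩
  · rw [hy_eq]
    exact K.add_mem hk (K.toAddSubgroup.zsmul_mem huK k)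
  · rw [K.infDist_of_mem_orthogonal hu, hy_eq,
      K.infDist_add_of_mem_of_mem_orthogonal hk (Kᗮ.toAddSubgroup.zsmul_mem hu k),
      norm_zsmul ℝ, Real.norm_eq_abs]
    exact le_mul_of_one_le_left (norm_nonneg u) (by exact_mod_cast Int.one_le_abs hk0)

end Submodule

theorem lattice_reflection_vertical_iff_general (n : ℕ)
    (L : AddSubgroup (EuclideanSpace ℝ (Fin n)))
    (Pl : Submodule ℝ (EuclideanSpace ℝ (Fin n)))
    (hPl : Module.finrank ℝ Pl = n - 1)
    (d : ℝ)
    (hd : IsLeast {r : ℝ | ∃ y ∈ L, y ∉ Pl ∧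
      infDist y (Pl : Set (EuclideanSpace ℝ (Fin n))) = r} d) :
    (∃ w ∈ L, w ∉ Pl ∧ infDist w (Pl : Set (EuclideanSpace ℝ (Fin n))) = d ∧ w ∈ Plᗮ) ↔
      (∃ u ∈ Plᗮ, ∀ x, x ∈ L ↔ ∃ k : ℤ, x - k • u ∈ L ⊓ Pl.toAddSubgroup) := by
  constructor
  · rintro ⟨w, hwL, hwPl, rfl, hw⟩
    have hw0 : w ≠ 0 := fun h => hwPl (h ▸ Pl.zero_mem)
    have hspan := Submodule.orthogonal_eq_span_singleton
      (by rw [finrank_euclideanSpace_fin, hPl]) hw hw0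
    have hmin : ∀ y ∈ L, y ∉ Pl → ‖w‖ ≤ infDist y Pl := fun y hy hyPl =>
      Pl.infDist_of_mem_orthogonal hw ▸ hd.2 ⟨y, hy, hyPl, rfl⟩
    exact ⟨w, hw, Submodule.mem_iff_exists_sub_zsmul_mem_of_orthogonal_eq_span hspan hwL hw0 hmin⟩
  · rintro ⟨u, hu, hLu⟩
    obtain ⟨y, hy, hyPl, rfl⟩ := hd.1
    obtain ⟨huL, huPl, hle⟩ := Submodule.mem_and_infDist_le_of_forall_mem_iff hu hLu hy hyPl
    exact ⟨u, huL, huPl, le_antisymm hle (hd.2 ⟨u, huL, huPl, rfl⟩), hu⟩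

/-- Let `Λ` be a full-rank lattice in `ℝⁿ` invariant under the reflection in a hyperplane
`Π` through the origin, `Λ₀ = Λ ∩ Π`, and `d` the minimal (positive) distance to `Π` of
points of `Λ \ Π`.  Then a point `w ∈ Λ \ Π` realizing the distance `d` can be chosen in
`Π^⊥` if and only if `Λ` is a vertical translation lattice with respect to `Π`. -/
theorem lattice_reflection_vertical_iff (n : ℕ)
    (L : AddSubgroup (EuclideanSpace ℝ (Fin n)))
    (hL : ∃ b : Fin n → EuclideanSpace ℝ (Fin n),
      LinearIndependent ℝ b ∧ L = AddSubgroup.closure (Set.range b))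
    (Pl : Submodule ℝ (EuclideanSpace ℝ (Fin n)))
    (hPl : Module.finrank ℝ Pl = n - 1)
    (hinv : ∀ x, x ∈ L ↔ Pl.reflection x ∈ L)
    (d : ℝ) (hd0 : 0 < d)
    (hd : IsLeast {r : ℝ | ∃ y ∈ L, y ∉ Pl ∧
      infDist y (Pl : Set (EuclideanSpace ℝ (Fin n))) = r} d) :
    (∃ w ∈ L, w ∉ Pl ∧ infDist w (Pl : Set (EuclideanSpace ℝ (Fin n))) = d ∧ w ∈ Plᗮ) ↔
      (∃ u ∈ Plᗮ, ∀ x, x ∈ L ↔ ∃ k : ℤ, x - k • u ∈ L ⊓ Pl.toAddSubgroup) :=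
  lattice_reflection_vertical_iff_general n L Pl hPl d hd
end

section
/- Let Λ be a rank-n lattice in ℝⁿ invariant under the reflection R in a hyperplane Π through o, and suppose Λ is not a vertical translation lattice with respect to Π. Let {v₁,...,v_{n−1}} be a basis of Λ₀ = Λ ∩ Π and let d be the minimal positive distance of points of Λ \ Π to Π. Then there is a point w of Λ \ Π at distance d from Π of the form w = ½(α₁v₁ + ⋯ + α_{n−1}v_{n−1} + u) with u ∈ Π^⊥ of norm 2d and α₁,...,α_{n−1} ∈ {0,1} not all zero, and the coefficients α_i are uniquely determined. -/
/-!
Take `y ∈ L \ K` at the minimal distance `d`. Then `y + Ry = 2 P_K y` lies in `L ∩ K`, so it is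
`∑ mᵢ vᵢ` with `mᵢ ∈ ℤ`, and `w = y - ∑ ⌊mᵢ/2⌋ vᵢ = ½(∑ (mᵢ mod 2) vᵢ + (y - Ry))` is a lattice point
at the same distance `d`. If every `mᵢ` were even, `w` would be a vector of `L ∩ K^⊥` of minimal
height, and every `x ∈ L` would differ from a multiple of `w` by a point of `L ∩ K` (otherwise
subtracting `⌊t⌋ w` leaves a point of height `{t} d < d`): `L` would be a vertical translation
lattice.

For uniqueness, `K^⊥` is a line, so two such points have vertical parts `u` and `±u`; their
difference or sum is then `½ ∑ (αᵢ ∓ βᵢ) vᵢ ∈ L ∩ K`, and linear independence forces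
`αᵢ ≡ βᵢ (mod 2)`.
-/

open Metric Module

theorem Submodule.exists_smul_eq_of_finrank_eq_one {𝕜 V : Type*} [DivisionRing 𝕜]
    [AddCommGroup V] [Module 𝕜 V] {K : Submodule 𝕜 V} (hK : finrank 𝕜 K = 1) {w x : V}
    (hw : w ∈ K) (hw0 : w ≠ 0) (hx : x ∈ K) : ∃ c : 𝕜, c • w = x := by
  obtain ⟨c, hc⟩ :=
    (finrank_eq_one_iff_of_nonzero' (⟨w, hw⟩ : K) (by simpa using hw0)).1 hK ⟨x, hx⟩
  exact ⟨c, congrArg Subtype.val hc⟩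

theorem Submodule.eq_or_eq_neg_of_norm_eq {F : Type*} [NormedAddCommGroup F] [NormedSpace ℝ F]
    {K : Submodule ℝ F} (hK : finrank ℝ K = 1) {x y : F} (hx : x ∈ K) (hy : y ∈ K)
    (h : ‖x‖ = ‖y‖) : x = y ∨ x = -y := by
  rcases eq_or_ne y 0 with rfl | hy0
  · simp_all
  obtain ⟨c, rfl⟩ := K.exists_smul_eq_of_finrank_eq_one hK hy hy0 hx
  rw [norm_smul, Real.norm_eq_abs, mul_eq_right₀ (norm_ne_zero_iff.2 hy0)] at h
  rcases abs_eq zero_le_one |>.1 h with rfl | rfl <;> simp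

theorem two_dvd_of_half_sum_mem_closure {F ι : Type*} [AddCommGroup F] [Module ℝ F] [Fintype ι]
    {v : ι → F} (hv : LinearIndependent ℝ v) {c : ι → ℤ}
    (h : (2 : ℝ)⁻¹ • ∑ i, (c i : ℝ) • v i ∈ AddSubgroup.closure (Set.range v)) (i : ι) :
    2 ∣ c i := by
  obtain ⟨k, hk⟩ := AddSubgroup.mem_closure_range_iff_of_fintype.1 h
  have hck := Fintype.linearIndependent_iffₛ.1 hv (fun i ↦ (2 : ℝ)⁻¹ * c i) (fun i ↦ k i)
    (by simpa only [mul_smul, ← Finset.smul_sum, Int.cast_smul_eq_zsmul] using hk) i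
  exact ⟨k i, by exact_mod_cast (inv_mul_eq_iff_eq_mul₀ two_ne_zero).1 hck⟩

variable {E : Type*} [NormedAddCommGroup E] [InnerProductSpace ℝ E]

theorem infDist_add_of_mem_orthogonal {K : Submodule ℝ E} {z u : E} (hz : z ∈ K) (hu : u ∈ Kᗮ) :
    infDist (z + u) (K : Set E) = ‖u‖ := by
  refine le_antisymm ?_ ((le_infDist ⟨0, K.zero_mem⟩).2 fun k hk ↦ ?_)
  · simpa [dist_eq_norm] using infDist_le_dist_of_mem (x := z + u) hz
  · have horth : inner ℝ u (z - k) = 0 := K.inner_left_of_mem_orthogonal (K.sub_mem hz hk) hu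
    rw [dist_eq_norm, show z + u - k = u + (z - k) by abel]
    refine (mul_self_le_mul_self_iff (norm_nonneg _) (norm_nonneg _)).2 ?_
    rw [norm_add_sq_eq_norm_sq_add_norm_sq_real horth]
    exact le_add_of_nonneg_right (mul_self_nonneg _)

theorem infDist_eq_norm_sub_starProjection (K : Submodule ℝ E) [K.HasOrthogonalProjection]
    (y : E) : infDist y (K : Set E) = ‖y - K.starProjection y‖ := by
  simpa using infDist_add_of_mem_orthogonal (K.starProjection_apply_mem y)
    (K.sub_starProjection_mem_orthogonal y)

section Lattice

variable {ι : Type*} {K : Submodule ℝ E} {L : AddSubgroup E} {v : ι → E}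

theorem mem_inf_of_inf_eq_closure_range
    (hLK : L ⊓ K.toAddSubgroup = AddSubgroup.closure (Set.range v)) (i : ι) :
    v i ∈ L ⊓ K.toAddSubgroup :=
  hLK ▸ AddSubgroup.subset_closure (Set.mem_range_self i)

theorem exists_half_sum_add_sub_reflection_mem [Fintype ι] [K.HasOrthogonalProjection]
    (hinv : ∀ x ∈ L, K.reflection x ∈ L)
    (hLK : L ⊓ K.toAddSubgroup = AddSubgroup.closure (Set.range v)) {y : E} (hy : y ∈ L) :
    ∃ α : ι → ℤ, (∀ i, α i = 0 ∨ α i = 1) ∧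
      (2 : ℝ)⁻¹ • (∑ i, (α i : ℝ) • v i + (y - K.reflection y)) ∈ L := by
  have hsum : y + K.reflection y ∈ L ⊓ K.toAddSubgroup := by
    refine ⟨L.add_mem hy (hinv y hy), ?_⟩
    rw [K.reflection_apply, add_sub_cancel]
    exact K.smul_of_tower_mem 2 (K.starProjection_apply_mem y)
  rw [hLK] at hsum
  obtain ⟨m, hm⟩ := AddSubgroup.mem_closure_range_iff_of_fintype.1 hsum
  refine ⟨fun i ↦ m i % 2, fun i ↦ Int.emod_two_eq_zero_or_one (m i), ?_⟩
  have hS : ∑ i, (m i / 2) • v i ∈ L :=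
    L.sum_mem fun i _ ↦ L.zsmul_mem (mem_inf_of_inf_eq_closure_range hLK i).1 _
  have hparity : ∑ i, ((m i % 2 : ℤ) : ℝ) • v i
      = y + K.reflection y - (2 : ℝ) • ∑ i, (m i / 2) • v i := by
    rw [hm, Finset.smul_sum, ← Finset.sum_sub_distrib]
    refine Finset.sum_congr rfl fun i _ ↦ ?_
    rw [← Int.cast_smul_eq_zsmul ℝ, ← Int.cast_smul_eq_zsmul ℝ, smul_smul, ← sub_smul]
    congr 1
    push_cast [Int.emod_def]
    ring
  convert L.sub_mem hy hS using 1
  rw [hparity]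
  module

theorem mem_iff_exists_sub_zsmul_mem_inf [K.HasOrthogonalProjection] (hK : finrank ℝ Kᗮ = 1)
    {w : E} (hwL : w ∈ L) (hwK : w ∈ Kᗮ) (hw0 : w ≠ 0)
    (hmin : ∀ x ∈ L, x ∉ K → ‖w‖ ≤ infDist x K) (x : E) :
    x ∈ L ↔ ∃ k : ℤ, x - k • w ∈ L ⊓ K.toAddSubgroup := by
  refine ⟨fun hx ↦ ?_, fun ⟨k, hk⟩ ↦ by simpa using L.add_mem hk.1 (L.zsmul_mem hwL k)⟩
  obtain ⟨s, hs⟩ :=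
    Kᗮ.exists_smul_eq_of_finrank_eq_one hK hwK hw0 (K.sub_starProjection_mem_orthogonal x)
  have hxL : x - ⌊s⌋ • w ∈ L := L.sub_mem hx (L.zsmul_mem hwL _)
  refine ⟨⌊s⌋, hxL, by_contra fun hxK ↦ ?_⟩
  have hdecomp : x - ⌊s⌋ • w = K.starProjection x + Int.fract s • w := by
    rw [Int.fract, sub_smul, hs, ← Int.cast_smul_eq_zsmul ℝ]
    abel
  have hdist : infDist (x - ⌊s⌋ • w) K = Int.fract s * ‖w‖ := by
    rw [hdecomp, infDist_add_of_mem_orthogonal (K.starProjection_apply_mem x)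
      (Kᗮ.smul_mem _ hwK), norm_smul, Real.norm_of_nonneg (Int.fract_nonneg s)]
  have := hmin _ hxL hxK
  nlinarith [Int.fract_lt_one s, norm_pos_iff.2 hw0]

theorem eq_of_half_sum_add_mem [Fintype ι] (hK : finrank ℝ Kᗮ = 1) (hv : LinearIndependent ℝ v)
    (hLK : L ⊓ K.toAddSubgroup = AddSubgroup.closure (Set.range v)) {α β : ι → ℤ}
    (hα : ∀ i, α i = 0 ∨ α i = 1) (hβ : ∀ i, β i = 0 ∨ β i = 1) {u u' : E} (hu : u ∈ Kᗮ)
    (hu' : u' ∈ Kᗮ) (hnorm : ‖u‖ = ‖u'‖)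
    (hαL : (2 : ℝ)⁻¹ • (∑ i, (α i : ℝ) • v i + u) ∈ L)
    (hβL : (2 : ℝ)⁻¹ • (∑ i, (β i : ℝ) • v i + u') ∈ L) : α = β := by
  have hdvd (c : ι → ℤ) (hc : (2 : ℝ)⁻¹ • ∑ i, (c i : ℝ) • v i ∈ L) (i : ι) : 2 ∣ c i := by
    refine two_dvd_of_half_sum_mem_closure hv (hLK ▸ ⟨hc, ?_⟩) i
    exact K.smul_mem _ (K.sum_mem fun i _ ↦ K.smul_mem _ (mem_inf_of_inf_eq_closure_range hLK i).2)
  have hparity : (∀ i, 2 ∣ α i - β i) ∨ ∀ i, 2 ∣ α i + β i := by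
    rcases Kᗮ.eq_or_eq_neg_of_norm_eq hK hu' hu hnorm.symm with rfl | rfl
    · refine .inl <| hdvd (α - β) ?_
      convert L.sub_mem hαL hβL using 1
      simp only [Pi.sub_apply, Int.cast_sub, sub_smul, Finset.sum_sub_distrib]
      module
    · refine .inr <| hdvd (α + β) ?_
      convert L.add_mem hαL hβL using 1
      simp only [Pi.add_apply, Int.cast_add, add_smul, Finset.sum_add_distrib]
      module
  funext i
  have := hα i
  have := hβ i
  rcases hparity with h | h <;> have := h i <;> omega

def IsHalfSumForm [Fintype ι] (K : Submodule ℝ E) (L : AddSubgroup E) (v : ι → E) (d : ℝ)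
    (α : ι → ℤ) : Prop :=
  (∀ i, α i = 0 ∨ α i = 1) ∧ (∃ i, α i ≠ 0) ∧
    ∃ u ∈ Kᗮ, ‖u‖ = 2 * d ∧
      (2 : ℝ)⁻¹ • ((∑ i, (α i : ℝ) • v i) + u) ∈ L ∧
      (2 : ℝ)⁻¹ • ((∑ i, (α i : ℝ) • v i) + u) ∉ K ∧
      infDist ((2 : ℝ)⁻¹ • ((∑ i, (α i : ℝ) • v i) + u)) (K : Set E) = d

theorem exists_isHalfSumForm [Fintype ι] [K.HasOrthogonalProjection] (hK : finrank ℝ Kᗮ = 1)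
    (hinv : ∀ x ∈ L, K.reflection x ∈ L)
    (hnv : ¬ ∃ u ∈ Kᗮ, ∀ x, x ∈ L ↔ ∃ k : ℤ, x - k • u ∈ L ⊓ K.toAddSubgroup)
    (hLK : L ⊓ K.toAddSubgroup = AddSubgroup.closure (Set.range v)) {d : ℝ} (hd0 : 0 < d)
    (hd : IsLeast {r : ℝ | ∃ y ∈ L, y ∉ K ∧ infDist y (K : Set E) = r} d) :
    ∃ α, IsHalfSumForm K L v d α := by
  obtain ⟨⟨y, hyL, -, hyd⟩, hmin⟩ := hd
  obtain ⟨α, hα01, hαL⟩ := exists_half_sum_add_sub_reflection_mem hinv hLK hyL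
  rw [infDist_eq_norm_sub_starProjection] at hyd
  have hu : y - K.reflection y = (2 : ℝ) • (y - K.starProjection y) := by
    rw [K.reflection_apply]
    module
  have hsumK : (2 : ℝ)⁻¹ • ∑ i, (α i : ℝ) • v i ∈ K :=
    K.smul_mem _ (K.sum_mem fun i _ ↦ K.smul_mem _ (mem_inf_of_inf_eq_closure_range hLK i).2)
  have hw : (2 : ℝ)⁻¹ • (∑ i, (α i : ℝ) • v i + (y - K.reflection y))
      = (2 : ℝ)⁻¹ • ∑ i, (α i : ℝ) • v i + (y - K.starProjection y) := by
    rw [hu]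
    module
  have hwd : infDist ((2 : ℝ)⁻¹ • (∑ i, (α i : ℝ) • v i + (y - K.reflection y))) K = d := by
    rw [hw, infDist_add_of_mem_orthogonal hsumK (K.sub_starProjection_mem_orthogonal y), hyd]
  refine ⟨α, hα01, ?_, _, hu ▸ Kᗮ.smul_mem _ (K.sub_starProjection_mem_orthogonal y),
    by rw [hu, norm_smul, hyd, Real.norm_two], hαL,
    fun hwK ↦ hd0.ne' (hwd ▸ infDist_zero_of_mem hwK), hwd⟩
  by_contra! hα0
  simp only [hα0, Int.cast_zero, zero_smul, Finset.sum_const_zero, smul_zero, zero_add] at hw hαL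
  refine hnv ⟨_, K.sub_starProjection_mem_orthogonal y, mem_iff_exists_sub_zsmul_mem_inf hK
    (hw ▸ hαL) (K.sub_starProjection_mem_orthogonal y) ?_ fun x hx hxK ↦ ?_⟩
  · intro h
    rw [h, norm_zero] at hyd
    exact hd0.ne hyd
  · exact hyd ▸ hmin ⟨x, hx, hxK, rfl⟩

end Lattice

theorem lattice_reflection_nonvertical_form_general (n : ℕ)
    (L : AddSubgroup (EuclideanSpace ℝ (Fin n)))
    (Pl : Submodule ℝ (EuclideanSpace ℝ (Fin n)))
    (hPl : Module.finrank ℝ Pl = n - 1)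
    (hinv : ∀ x, x ∈ L ↔ Pl.reflection x ∈ L)
    (hnv : ¬ ∃ u ∈ Plᗮ, ∀ x, x ∈ L ↔ ∃ k : ℤ, x - k • u ∈ L ⊓ Pl.toAddSubgroup)
    (v : Fin (n - 1) → EuclideanSpace ℝ (Fin n))
    (hvli : LinearIndependent ℝ v)
    (hvspan : L ⊓ Pl.toAddSubgroup = AddSubgroup.closure (Set.range v))
    (d : ℝ) (hd0 : 0 < d)
    (hd : IsLeast {r : ℝ | ∃ y ∈ L, y ∉ Pl ∧
      infDist y (Pl : Set (EuclideanSpace ℝ (Fin n))) = r} d) :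
    ∃ α : Fin (n - 1) → ℤ,
      ((∀ i, α i = 0 ∨ α i = 1) ∧ (∃ i, α i ≠ 0) ∧
        ∃ u ∈ Plᗮ, ‖u‖ = 2 * d ∧
          (2 : ℝ)⁻¹ • ((∑ i, (α i : ℝ) • v i) + u) ∈ L ∧
          (2 : ℝ)⁻¹ • ((∑ i, (α i : ℝ) • v i) + u) ∉ Pl ∧
          infDist ((2 : ℝ)⁻¹ • ((∑ i, (α i : ℝ) • v i) + u))
            (Pl : Set (EuclideanSpace ℝ (Fin n))) = d) ∧
      ∀ β : Fin (n - 1) → ℤ,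
        ((∀ i, β i = 0 ∨ β i = 1) ∧ (∃ i, β i ≠ 0) ∧
          ∃ u ∈ Plᗮ, ‖u‖ = 2 * d ∧
            (2 : ℝ)⁻¹ • ((∑ i, (β i : ℝ) • v i) + u) ∈ L ∧
            (2 : ℝ)⁻¹ • ((∑ i, (β i : ℝ) • v i) + u) ∉ Pl ∧
            infDist ((2 : ℝ)⁻¹ • ((∑ i, (β i : ℝ) • v i) + u))
              (Pl : Set (EuclideanSpace ℝ (Fin n))) = d) → β = α := by
  have hPl_ne_top : Pl ≠ ⊤ := by
    obtain ⟨⟨y, -, hy, -⟩, -⟩ := hd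
    exact fun h ↦ hy (h ▸ Submodule.mem_top)
  have hK : finrank ℝ Plᗮ = 1 := by
    refine Submodule.finrank_add_finrank_orthogonal' ?_
    have := Submodule.finrank_lt hPl_ne_top
    rw [finrank_euclideanSpace_fin] at this ⊢
    omega
  obtain ⟨α, hα⟩ := exists_isHalfSumForm hK (fun x ↦ (hinv x).1) hnv hvspan hd0 hd
  refine ⟨α, hα, fun β ⟨hβ01, _, u', hu', hu'd, hβL, _⟩ ↦ ?_⟩
  obtain ⟨hα01, -, u, hu, hud, hαL, -⟩ := hα
  exact eq_of_half_sum_add_mem hK hvli hvspan hβ01 hα01 hu' hu (hu'd.trans hud.symm) hβL hαL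

/-- Let `Λ` be a full-rank lattice in `ℝⁿ` invariant under the reflection in a hyperplane
`Π` through the origin, which is not a vertical translation lattice with respect to `Π`.
Let `{v₁, …, v_{n-1}}` be a basis of `Λ₀ = Λ ∩ Π` and `d` the minimal positive distance
of points of `Λ \ Π` to `Π`.  Then there is a point `w` of `Λ \ Π` at distance `d` from
`Π` of the form `w = ½(α₁v₁ + ⋯ + α_{n-1}v_{n-1} + u)` with `u ∈ Π^⊥` of norm `2d` and
`αᵢ ∈ {0,1}` not all zero, and the coefficients `αᵢ` are uniquely determined. -/
theorem lattice_reflection_nonvertical_form (n : ℕ)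
    (L : AddSubgroup (EuclideanSpace ℝ (Fin n)))
    (hL : ∃ b : Fin n → EuclideanSpace ℝ (Fin n),
      LinearIndependent ℝ b ∧ L = AddSubgroup.closure (Set.range b))
    (Pl : Submodule ℝ (EuclideanSpace ℝ (Fin n)))
    (hPl : Module.finrank ℝ Pl = n - 1)
    (hinv : ∀ x, x ∈ L ↔ Pl.reflection x ∈ L)
    (hnv : ¬ ∃ u ∈ Plᗮ, ∀ x, x ∈ L ↔ ∃ k : ℤ, x - k • u ∈ L ⊓ Pl.toAddSubgroup)
    (v : Fin (n - 1) → EuclideanSpace ℝ (Fin n))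
    (hvli : LinearIndependent ℝ v)
    (hvspan : L ⊓ Pl.toAddSubgroup = AddSubgroup.closure (Set.range v))
    (d : ℝ) (hd0 : 0 < d)
    (hd : IsLeast {r : ℝ | ∃ y ∈ L, y ∉ Pl ∧
      infDist y (Pl : Set (EuclideanSpace ℝ (Fin n))) = r} d) :
    ∃ α : Fin (n - 1) → ℤ,
      ((∀ i, α i = 0 ∨ α i = 1) ∧ (∃ i, α i ≠ 0) ∧
        ∃ u ∈ Plᗮ, ‖u‖ = 2 * d ∧
          (2 : ℝ)⁻¹ • ((∑ i, (α i : ℝ) • v i) + u) ∈ L ∧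
          (2 : ℝ)⁻¹ • ((∑ i, (α i : ℝ) • v i) + u) ∉ Pl ∧
          infDist ((2 : ℝ)⁻¹ • ((∑ i, (α i : ℝ) • v i) + u))
            (Pl : Set (EuclideanSpace ℝ (Fin n))) = d) ∧
      ∀ β : Fin (n - 1) → ℤ,
        ((∀ i, β i = 0 ∨ β i = 1) ∧ (∃ i, β i ≠ 0) ∧
          ∃ u ∈ Plᗮ, ‖u‖ = 2 * d ∧
            (2 : ℝ)⁻¹ • ((∑ i, (β i : ℝ) • v i) + u) ∈ L ∧
            (2 : ℝ)⁻¹ • ((∑ i, (β i : ℝ) • v i) + u) ∉ Pl ∧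
            infDist ((2 : ℝ)⁻¹ • ((∑ i, (β i : ℝ) • v i) + u))
              (Pl : Set (EuclideanSpace ℝ (Fin n))) = d) → β = α :=
  lattice_reflection_nonvertical_form_general n L Pl hPl hinv hnv v hvli hvspan d hd0 hd
end
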